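/- arXiv:1605.06723 — 2 statements merged into one kernel-verified Lean document; each statement's English description precedes it below -/
import Mathlib

section
/- For 0 < α < n and γ > 0, the Bessel-Riesz kernel K_{α,γ}(x) = |x|^{α-n}/(1+|x|)^γ belongs to L^t(ℝ^n) whenever n/(n+γ-α) < t < n/(n-α). -/
open MeasureTheory Metric ENNReal

noncomputable section

abbrev En (n : ℕ) := EuclideanSpace ℝ (Fin n)

/-- The Bessel-Riesz kernel `K_{α,γ}(x) = |x|^{α-n}/(1+|x|)^γ`. -/
def brKernel (n : ℕ) (α γ : ℝ) (x : En n) : ℝ :=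
  ‖x‖ ^ (α - n) / (1 + ‖x‖) ^ γ

/-- The Bessel-Riesz operator `I_{α,γ} f(x) = ∫ K_{α,γ}(x-y) f(y) dy`. -/
def brOp (n : ℕ) (α γ : ℝ) (f : En n → ℝ) (x : En n) : ℝ :=
  ∫ y, brKernel n α γ (x - y) * f y

/-- The Hardy-Littlewood maximal function (sup over balls containing `x`). -/
def maximalFn (n : ℕ) (f : En n → ℝ) (x : En n) : ℝ≥0∞ :=
  ⨆ (a : En n) (r : ℝ) (_ : 0 < r) (_ : x ∈ ball a r),
    (volume (ball a r))⁻¹ * ∫⁻ y in ball a r, ENNReal.ofReal |f y|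

/-- The classical Morrey norm `‖f‖_{L^{p,q}}`. -/
def morreyNorm (n : ℕ) (p q : ℝ) (f : En n → ℝ) : ℝ≥0∞ :=
  ⨆ (r : ℝ) (_ : 0 < r) (a : En n),
    ENNReal.ofReal (r ^ ((n : ℝ) * (1 / q - 1 / p))) *
      (∫⁻ x in ball a r, ENNReal.ofReal (|f x| ^ p)) ^ (1 / p)

/-- The generalized Morrey norm `‖f‖_{L^{p,φ}}`. -/
def gMorreyNorm (n : ℕ) (p : ℝ) (φ : ℝ → ℝ) (f : En n → ℝ) : ℝ≥0∞ :=
  ⨆ (r : ℝ) (_ : 0 < r) (a : En n),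
    (ENNReal.ofReal (φ r))⁻¹ *
      (((ENNReal.ofReal r) ^ (n : ℝ))⁻¹ *
        ∫⁻ x in ball a r, ENNReal.ofReal (|f x| ^ p)) ^ (1 / p)

/-- The generalized Morrey norm for `ℝ≥0∞`-valued functions. -/
def gMorreyNormE (n : ℕ) (p : ℝ) (φ : ℝ → ℝ) (g : En n → ℝ≥0∞) : ℝ≥0∞ :=
  ⨆ (r : ℝ) (_ : 0 < r) (a : En n),
    (ENNReal.ofReal (φ r))⁻¹ *
      (((ENNReal.ofReal r) ^ (n : ℝ))⁻¹ * ∫⁻ x in ball a r, (g x) ^ p) ^ (1 / p)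

/-! Near the origin `K^t ≤ ‖x‖^{-(n-α)t}`, which is locally integrable since `(n-α)t < n`; away
from it `K^t ≤ 2^{(n-α)t} (1+‖x‖)^{-(n+γ-α)t}`, which is integrable at infinity since
`(n+γ-α)t > n`. -/

open Set

section BesselRieszKernel

variable {n : ℕ} {α γ t : ℝ}

lemma brKernel_nonneg (x : En n) : 0 ≤ brKernel n α γ x := by
  unfold brKernel; positivity

lemma measurable_brKernel : Measurable (brKernel n α γ) := by
  unfold brKernel; fun_prop

lemma brKernel_le_rpow_norm (hγ : 0 ≤ γ) (x : En n) : brKernel n α γ x ≤ ‖x‖ ^ (α - n) :=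
  div_le_self (by positivity) (Real.one_le_rpow (by linarith [norm_nonneg x]) hγ)

lemma brKernel_le_of_one_le_norm (hαn : α ≤ n) {x : En n} (hx : 1 ≤ ‖x‖) :
    brKernel n α γ x ≤ 2 ^ ((n : ℝ) - α) * (1 + ‖x‖) ^ (α - n - γ) := by
  have hpos : 0 < 1 + ‖x‖ := by linarith
  have hnorm : ‖x‖ ^ (α - n) ≤ ((1 + ‖x‖) / 2) ^ (α - n) :=
    Real.rpow_le_rpow_of_nonpos (by positivity) (by linarith) (by linarith)
  calc brKernel n α γ x = ‖x‖ ^ (α - n) * (1 + ‖x‖) ^ (-γ) := by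
        rw [brKernel, div_eq_mul_inv, ← Real.rpow_neg hpos.le]
    _ ≤ ((1 + ‖x‖) / 2) ^ (α - n) * (1 + ‖x‖) ^ (-γ) := by gcongr
    _ = 2 ^ ((n : ℝ) - α) * (1 + ‖x‖) ^ (α - n - γ) := by
        rw [Real.div_rpow hpos.le zero_le_two, div_eq_mul_inv, ← Real.rpow_neg zero_le_two,
          sub_eq_add_neg (α - n), Real.rpow_add hpos, neg_sub]
        ring

lemma integrableOn_ball_brKernel_rpow (hn : 1 ≤ n) (hγ : 0 ≤ γ) (ht : 0 ≤ t)
    (hnt : ((n : ℝ) - α) * t < n) (r : ℝ) :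
    IntegrableOn (fun x ↦ brKernel n α γ x ^ t) (ball (0 : En n) r) := by
  refine integrableOn_ball_of_norm_le_rpow (C := 1) (by simpa using hn)
    (by simpa using hnt) (Filter.Eventually.of_forall fun x ↦ ?_)
    (measurable_brKernel.pow_const t).aestronglyMeasurable
  rw [Real.norm_of_nonneg (Real.rpow_nonneg (brKernel_nonneg x) t), one_mul,
    show -(((n : ℝ) - α) * t) = (α - n) * t by ring, Real.rpow_mul (norm_nonneg x)]
  gcongr
  · exact brKernel_nonneg x
  · exact brKernel_le_rpow_norm hγ x

lemma integrableOn_compl_ball_brKernel_rpow (hαn : α ≤ n) (ht : 0 ≤ t)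
    (hnt : (n : ℝ) < ((n : ℝ) + γ - α) * t) :
    IntegrableOn (fun x ↦ brKernel n α γ x ^ t) (ball (0 : En n) 1)ᶜ := by
  have hdecay : Integrable fun x : En n ↦
      2 ^ (((n : ℝ) - α) * t) * (1 + ‖x‖) ^ (-(((n : ℝ) + γ - α) * t)) :=
    (integrable_one_add_norm (by simpa using hnt)).const_mul _
  refine hdecay.integrableOn.mono' (measurable_brKernel.pow_const t).aestronglyMeasurable
    ((ae_restrict_iff' measurableSet_ball.compl).2 (Filter.Eventually.of_forall fun x hx ↦ ?_))
  have hx1 : 1 ≤ ‖x‖ := by simpa using hx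
  have hpos : 0 < 1 + ‖x‖ := by linarith
  rw [Real.norm_of_nonneg (Real.rpow_nonneg (brKernel_nonneg x) t)]
  calc brKernel n α γ x ^ t ≤ (2 ^ ((n : ℝ) - α) * (1 + ‖x‖) ^ (α - n - γ)) ^ t := by
        gcongr
        · exact brKernel_nonneg x
        · exact brKernel_le_of_one_le_norm hαn hx1
    _ = 2 ^ (((n : ℝ) - α) * t) * (1 + ‖x‖) ^ (-(((n : ℝ) + γ - α) * t)) := by
        rw [Real.mul_rpow (by positivity) (by positivity), ← Real.rpow_mul zero_le_two,
          ← Real.rpow_mul hpos.le]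
        ring_nf

end BesselRieszKernel

theorem besselRiesz_kernel_memLp_general (n : ℕ) (hn : 1 ≤ n) (α γ t : ℝ)
    (hαn : α < n) (hγ : 0 < γ)
    (ht1 : (n : ℝ) / ((n : ℝ) + γ - α) < t) (ht2 : t < (n : ℝ) / ((n : ℝ) - α)) :
    MemLp (brKernel n α γ) (ENNReal.ofReal t) volume := by
  have hnγα : 0 < (n : ℝ) + γ - α := by linarith
  have ht : 0 < t := (div_nonneg n.cast_nonneg hnγα.le).trans_lt ht1
  rw [← integrable_norm_rpow_iff measurable_brKernel.aestronglyMeasurable (by simpa using ht)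
    ofReal_ne_top, toReal_ofReal ht.le]
  simp_rw [Real.norm_of_nonneg (brKernel_nonneg _)]
  rw [← integrableOn_univ, ← union_compl_self (ball 0 1)]
  exact (integrableOn_ball_brKernel_rpow hn hγ.le ht.le
      (by rw [lt_div_iff₀ (by linarith)] at ht2; linarith) 1).union
    (integrableOn_compl_ball_brKernel_rpow hαn.le ht.le
      (by rw [div_lt_iff₀ hnγα] at ht1; linarith))

/-- the Bessel-Riesz kernel belongs to `L^t(ℝ^n)` for
`n/(n+γ-α) < t < n/(n-α)`. -/
theorem besselRiesz_kernel_memLp (n : ℕ) (hn : 1 ≤ n) (α γ t : ℝ)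
    (hα0 : 0 < α) (hαn : α < n) (hγ : 0 < γ)
    (ht1 : (n : ℝ) / ((n : ℝ) + γ - α) < t) (ht2 : t < (n : ℝ) / ((n : ℝ) - α)) :
    MemLp (brKernel n α γ) (ENNReal.ofReal t) volume :=
  besselRiesz_kernel_memLp_general n hn α γ t hαn hγ ht1 ht2
end
end

section
/- Local dyadic estimate: for 0 < α < n, γ > 0, 1 ≤ s, there is a constant C such that for every f ∈ L¹_loc(ℝ^n), every x ∈ ℝ^n and R > 0, ∫_{|x-y|<R} K_{α,γ}(x-y)|f(y)| dy ≤ C · Mf(x) · (∑_{k=-∞}^{-1} (2^k R)^{(α-n)s+n}/(1+2^k R)^{γ s})^{1/s} · R^{n/s'}, where s' is the conjugate exponent of s. -/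
open MeasureTheory Metric ENNReal

noncomputable section

/-! Cut `ball x R` into the dyadic annuli `cₖ ≤ |x - y| < 2cₖ`, `cₖ = 2^(-k-1) R`. On the `k`-th
annulus the kernel is at most its value at radius `cₖ`, and `∫ |f|` over the annulus is at most
`Mf(x) |B(x, 2cₖ)| ≈ Mf(x) cₖⁿ`, so the `k`-th piece is
`≲ Mf(x) cₖ^α / (1 + cₖ)^γ = Mf(x) bₖ^(1/s) cₖ^(n/s')` with `bₖ` the `k`-th summand of the
statement. Since `cₖ^(n/s') = R^(n/s') 2^(-(k+1) n/s')`, bounding each `bₖ` by `∑ⱼ bⱼ` leaves a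
convergent geometric series when `s > 1`; for `s = 1` the factor is `1`. -/

def dyadicRadius (R : ℝ) (k : ℕ) : ℝ := (2 : ℝ) ^ (-(k : ℤ) - 1) * R

def dyadicAnnulus {X : Type*} [PseudoMetricSpace X] (x : X) (r : ℝ) : Set X :=
  ball x (2 * r) \ ball x r

lemma dyadicRadius_pos {R : ℝ} (hR : 0 < R) (k : ℕ) : 0 < dyadicRadius R k :=
  mul_pos (_root_.zpow_pos two_pos _) hR

lemma dyadicRadius_rpow {R : ℝ} (hR : 0 < R) (t : ℝ) (k : ℕ) :
    dyadicRadius R k ^ t = ((2 : ℝ) ^ (-t)) ^ (k + 1) * R ^ t := by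
  rw [dyadicRadius, Real.mul_rpow (_root_.zpow_pos two_pos _).le hR.le, ← Real.rpow_intCast,
    ← Real.rpow_mul zero_le_two, ← Real.rpow_natCast, ← Real.rpow_mul zero_le_two]
  push_cast
  ring_nf

lemma exists_dyadicRadius_le_lt {d R : ℝ} (hd : 0 < d) (hdR : d < R) :
    ∃ k : ℕ, dyadicRadius R k ≤ d ∧ d < 2 * dyadicRadius R k := by
  have hR : 0 < R := hd.trans hdR
  obtain ⟨m, hm_le, hm_lt⟩ := exists_mem_Ico_zpow (div_pos hd hR) _root_.one_lt_two
  have hm_neg : m < 0 := by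
    have : (2 : ℝ) ^ m < 2 ^ (0 : ℤ) := by
      rw [zpow_zero]; exact hm_le.trans_lt ((div_lt_one hR).mpr hdR)
    exact (zpow_lt_zpow_iff_right₀ _root_.one_lt_two).mp this
  refine ⟨(-m - 1).toNat, ?_⟩
  have hk : -((-m - 1).toNat : ℤ) - 1 = m := by rw [Int.toNat_of_nonneg (by omega)]; ring
  rw [dyadicRadius, hk, ← mul_assoc, ← zpow_one_add₀ two_ne_zero, add_comm]
  exact ⟨(le_div_iff₀ hR).mp hm_le, (div_lt_iff₀ hR).mp hm_lt⟩

lemma ball_subset_insert_iUnion_dyadicAnnulus {X : Type*} [MetricSpace X] (x : X) (R : ℝ) :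
    ball x R ⊆ insert x (⋃ k : ℕ, dyadicAnnulus x (dyadicRadius R k)) := by
  intro y hy
  rcases eq_or_ne y x with rfl | hyx
  · exact Set.mem_insert _ _
  obtain ⟨k, hk_le, hk_lt⟩ := exists_dyadicRadius_le_lt (dist_pos.mpr hyx) (mem_ball.mp hy)
  exact Set.mem_insert_of_mem _
    (Set.mem_iUnion.mpr ⟨k, hk_lt, fun h => (mem_ball.mp h).not_ge hk_le⟩)

lemma lintegral_ball_le_tsum_dyadicAnnulus {X : Type*} [MetricSpace X] [MeasurableSpace X]
    (μ : Measure X) [NullSingletonClass μ] (g : X → ℝ≥0∞) (x : X) (R : ℝ) :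
    ∫⁻ y in ball x R, g y ∂μ ≤ ∑' k : ℕ, ∫⁻ y in dyadicAnnulus x (dyadicRadius R k), g y ∂μ :=
  calc ∫⁻ y in ball x R, g y ∂μ
      ≤ ∫⁻ y in insert x (⋃ k : ℕ, dyadicAnnulus x (dyadicRadius R k)), g y ∂μ :=
        lintegral_mono_set (ball_subset_insert_iUnion_dyadicAnnulus x R)
    _ = ∫⁻ y in ⋃ k : ℕ, dyadicAnnulus x (dyadicRadius R k), g y ∂μ :=
        setLIntegral_congr (insert_ae_eq_self x _)
    _ ≤ _ := lintegral_iUnion_le _ _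

lemma lintegral_ball_le_maximalFn_mul {n : ℕ} (f : En n → ℝ) (x : En n) (r : ℝ) :
    ∫⁻ y in ball x r, ENNReal.ofReal |f y| ≤ maximalFn n f x * volume (ball x r) := by
  rcases le_or_gt r 0 with hr | hr
  · simp [ball_eq_empty.mpr hr]
  have hmean :
      (volume (ball x r))⁻¹ * ∫⁻ y in ball x r, ENNReal.ofReal |f y| ≤ maximalFn n f x :=
    le_iSup_of_le x <| le_iSup_of_le r <| le_iSup_of_le hr <|
      le_iSup_of_le (mem_ball_self hr) le_rfl
  calc ∫⁻ y in ball x r, ENNReal.ofReal |f y|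
      = (volume (ball x r))⁻¹ * (∫⁻ y in ball x r, ENNReal.ofReal |f y|) *
          volume (ball x r) := by
        rw [mul_comm, ← mul_assoc, ENNReal.mul_inv_cancel (measure_ball_pos volume x hr).ne'
          measure_ball_lt_top.ne, one_mul]
    _ ≤ maximalFn n f x * volume (ball x r) := by gcongr

lemma brKernel_le_of_le_norm {n : ℕ} {α γ r : ℝ} (hαn : α ≤ n) (hγ : 0 ≤ γ) (hr : 0 < r)
    {z : En n} (hz : r ≤ ‖z‖) : brKernel n α γ z ≤ r ^ (α - n) / (1 + r) ^ γ :=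
  div_le_div₀ (Real.rpow_nonneg hr.le _) (Real.rpow_le_rpow_of_nonpos hr hz (by linarith))
    (Real.rpow_pos_of_pos (by linarith) _) (Real.rpow_le_rpow (by linarith) (by linarith) hγ)

lemma lintegral_dyadicAnnulus_brKernel_le {n : ℕ} {α γ r : ℝ} (hαn : α ≤ n) (hγ : 0 ≤ γ)
    (f : En n → ℝ) (x : En n) (hr : 0 < r) :
    ∫⁻ y in dyadicAnnulus x r, ENNReal.ofReal (brKernel n α γ (x - y) * |f y|) ≤
      2 ^ n * volume (ball (0 : En n) 1) * maximalFn n f x *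
        ENNReal.ofReal (r ^ α / (1 + r) ^ γ) := by
  set A := r ^ (α - n) / (1 + r) ^ γ
  have hA : 0 ≤ A := div_nonneg (Real.rpow_nonneg hr.le _) (Real.rpow_nonneg (by linarith) _)
  have hkernel : ∀ y ∈ dyadicAnnulus x r, ENNReal.ofReal (brKernel n α γ (x - y) * |f y|) ≤
      ENNReal.ofReal A * ENNReal.ofReal |f y| := by
    rintro y ⟨-, hy⟩
    have hry : r ≤ ‖x - y‖ := by rw [← dist_eq_norm, dist_comm]; simpa using hy
    rw [← ENNReal.ofReal_mul hA]
    gcongr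
    exact brKernel_le_of_le_norm hαn hγ hr hry
  have hvolume : ENNReal.ofReal A * volume (ball x (2 * r)) =
      2 ^ n * volume (ball (0 : En n) 1) * ENNReal.ofReal (r ^ α / (1 + r) ^ γ) := by
    have hA_mul : A * (2 * r) ^ n = 2 ^ n * (r ^ α / (1 + r) ^ γ) := by
      rw [mul_pow, ← mul_assoc, mul_comm A, mul_assoc, div_mul_eq_mul_div,
        ← Real.rpow_natCast r, ← Real.rpow_add hr, sub_add_cancel]
    rw [Measure.addHaar_ball_of_pos _ _ (by positivity), finrank_euclideanSpace_fin, ← mul_assoc,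
      ← ENNReal.ofReal_mul hA, hA_mul, ENNReal.ofReal_mul (by positivity),
      ENNReal.ofReal_pow zero_le_two, ENNReal.ofReal_ofNat]
    ring
  calc ∫⁻ y in dyadicAnnulus x r, ENNReal.ofReal (brKernel n α γ (x - y) * |f y|)
      ≤ ∫⁻ y in dyadicAnnulus x r, ENNReal.ofReal A * ENNReal.ofReal |f y| :=
        setLIntegral_mono' (measurableSet_ball.diff measurableSet_ball) hkernel
    _ = ENNReal.ofReal A * ∫⁻ y in dyadicAnnulus x r, ENNReal.ofReal |f y| :=
        lintegral_const_mul' _ _ ENNReal.ofReal_ne_top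
    _ ≤ ENNReal.ofReal A * (maximalFn n f x * volume (ball x (2 * r))) := by
        gcongr
        exact (lintegral_mono_set Set.sdiff_subset).trans (lintegral_ball_le_maximalFn_mul f x _)
    _ = _ := by rw [mul_left_comm, hvolume]; ring

lemma rpow_div_rpow_eq_rpow_mul_rpow {c α γ n s : ℝ} (hc : 0 < c) (hs : s ≠ 0) :
    c ^ α / (1 + c) ^ γ =
      (c ^ ((α - n) * s + n) / (1 + c) ^ (γ * s)) ^ (1 / s) * c ^ (n * (1 - 1 / s)) := by
  rw [Real.div_rpow (Real.rpow_nonneg hc.le _) (Real.rpow_nonneg (by linarith) _),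
    ← Real.rpow_mul hc.le, ← Real.rpow_mul (by linarith), div_mul_eq_mul_div,
    ← Real.rpow_add hc]
  congr 2 <;> field_simp
  ring

lemma tsum_rpow_mul_pow_le {p : ℝ} (hp : 0 ≤ p) (θ : ℝ≥0∞) (b : ℕ → ℝ≥0∞) :
    ∑' k, b k ^ p * θ ^ k ≤ (1 - θ)⁻¹ * (∑' k, b k) ^ p :=
  calc ∑' k, b k ^ p * θ ^ k ≤ ∑' k, (∑' j, b j) ^ p * θ ^ k :=
        ENNReal.tsum_le_tsum fun k => by gcongr; exact ENNReal.le_tsum k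
    _ = (1 - θ)⁻¹ * (∑' j, b j) ^ p := by
        rw [ENNReal.tsum_mul_left, ENNReal.tsum_geometric, mul_comm]

lemma exists_tsum_rpow_mul_dyadicRadius_rpow_le {n s : ℝ} (hn : 0 < n) (hs : 1 ≤ s) :
    ∃ G ≠ ∞, ∀ R > 0, ∀ b : ℕ → ℝ≥0∞,
      ∑' k, b k ^ (1 / s) * ENNReal.ofReal (dyadicRadius R k ^ (n * (1 - 1 / s))) ≤
        G * (∑' k, b k) ^ (1 / s) * ENNReal.ofReal (R ^ (n * (1 - 1 / s))) := by
  rcases hs.eq_or_lt with rfl | hs1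
  · exact ⟨1, one_ne_top, fun R _ b => by simp⟩
  set t := n * (1 - 1 / s)
  set θ := ENNReal.ofReal ((2 : ℝ) ^ (-t))
  have ht : 0 < t := mul_pos hn (by rw [sub_pos, div_lt_one (by linarith)]; exact hs1)
  have hθ : θ < 1 := ENNReal.ofReal_lt_one.mpr
    (Real.rpow_lt_one_of_one_lt_of_neg _root_.one_lt_two (neg_lt_zero.mpr ht))
  refine ⟨(1 - θ)⁻¹ * θ, ?_, fun R hR b => ?_⟩
  · exact mul_ne_top (inv_ne_top.mpr (tsub_pos_of_lt hθ).ne') ofReal_ne_top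
  have hdyadic : ∀ k,
      ENNReal.ofReal (dyadicRadius R k ^ t) = θ ^ k * (θ * ENNReal.ofReal (R ^ t)) := by
    intro k
    rw [dyadicRadius_rpow hR, ENNReal.ofReal_mul (by positivity),
      ENNReal.ofReal_pow (by positivity)]
    ring
  calc ∑' k, b k ^ (1 / s) * ENNReal.ofReal (dyadicRadius R k ^ t)
      = (∑' k, b k ^ (1 / s) * θ ^ k) * (θ * ENNReal.ofReal (R ^ t)) := by
        simp only [hdyadic, ← mul_assoc, ENNReal.tsum_mul_right]
    _ ≤ (1 - θ)⁻¹ * (∑' k, b k) ^ (1 / s) * (θ * ENNReal.ofReal (R ^ t)) := by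
        gcongr
        exact tsum_rpow_mul_pow_le (by positivity) θ b
    _ = (1 - θ)⁻¹ * θ * (∑' k, b k) ^ (1 / s) * ENNReal.ofReal (R ^ t) := by ring

theorem besselRiesz_local_dyadic_general (n : ℕ) (hn : 1 ≤ n) (α γ s : ℝ)
    (hαn : α < n) (hγ : 0 < γ) (hs : 1 ≤ s) :
    ∃ C > (0 : ℝ), ∀ f : En n → ℝ, LocallyIntegrable f volume →
      ∀ x : En n, ∀ R : ℝ, 0 < R →
        (∫⁻ y in ball x R, ENNReal.ofReal (brKernel n α γ (x - y) * |f y|)) ≤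
          ENNReal.ofReal C * maximalFn n f x *
            (∑' k : ℕ, ENNReal.ofReal
              (((2 : ℝ) ^ (-(k : ℤ) - 1) * R) ^ ((α - n) * s + n) /
                (1 + (2 : ℝ) ^ (-(k : ℤ) - 1) * R) ^ (γ * s))) ^ (1 / s) *
            ENNReal.ofReal (R ^ ((n : ℝ) * (1 - 1 / s))) := by
  have : Nontrivial (En n) := by
    have : Nonempty (Fin n) := ⟨⟨0, hn⟩⟩
    infer_instance
  obtain ⟨G, hG, hsum⟩ :=
    exists_tsum_rpow_mul_dyadicRadius_rpow_le (n := n) (by exact_mod_cast hn) hs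
  set D := 2 ^ n * volume (ball (0 : En n) 1) * G
  have hD : D ≠ ∞ :=
    mul_ne_top (mul_ne_top (pow_ne_top ofNat_ne_top) measure_ball_lt_top.ne) hG
  have hDC : D ≤ ENNReal.ofReal (D.toReal + 1) := by
    rw [ENNReal.ofReal_add ENNReal.toReal_nonneg zero_le_one, ENNReal.ofReal_toReal hD]
    exact le_self_add
  refine ⟨D.toReal + 1, by positivity, fun f _ x R hR => ?_⟩
  set b : ℕ → ℝ≥0∞ := fun k => ENNReal.ofReal
    (dyadicRadius R k ^ ((α - n) * s + n) / (1 + dyadicRadius R k) ^ (γ * s))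
  calc ∫⁻ y in ball x R, ENNReal.ofReal (brKernel n α γ (x - y) * |f y|)
      ≤ ∑' k, ∫⁻ y in dyadicAnnulus x (dyadicRadius R k),
          ENNReal.ofReal (brKernel n α γ (x - y) * |f y|) :=
        lintegral_ball_le_tsum_dyadicAnnulus volume _ x R
    _ ≤ ∑' k, 2 ^ n * volume (ball (0 : En n) 1) * maximalFn n f x *
          ENNReal.ofReal (dyadicRadius R k ^ α / (1 + dyadicRadius R k) ^ γ) :=
        ENNReal.tsum_le_tsum fun k =>
          lintegral_dyadicAnnulus_brKernel_le hαn.le hγ.le f x (dyadicRadius_pos hR k)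
    _ = 2 ^ n * volume (ball (0 : En n) 1) * maximalFn n f x *
          ∑' k, b k ^ (1 / s) * ENNReal.ofReal (dyadicRadius R k ^ ((n : ℝ) * (1 - 1 / s))) := by
        rw [ENNReal.tsum_mul_left]
        refine congrArg _ (tsum_congr fun k => ?_)
        have hc := dyadicRadius_pos hR k
        rw [rpow_div_rpow_eq_rpow_mul_rpow (n := n) (s := s) hc (by linarith),
          ENNReal.ofReal_mul (by positivity),
          ENNReal.ofReal_rpow_of_nonneg (by positivity) (by positivity)]
    _ ≤ 2 ^ n * volume (ball (0 : En n) 1) * maximalFn n f x *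
          (G * (∑' k, b k) ^ (1 / s) * ENNReal.ofReal (R ^ ((n : ℝ) * (1 - 1 / s)))) := by
        gcongr
        exact hsum R hR b
    _ = D * maximalFn n f x * (∑' k, b k) ^ (1 / s) *
          ENNReal.ofReal (R ^ ((n : ℝ) * (1 - 1 / s))) := by ring
    _ ≤ _ := mul_le_mul_left (mul_le_mul_left (mul_le_mul_left hDC _) _) _

/-- local dyadic estimate for the Bessel-Riesz kernel via
the Hardy-Littlewood maximal function. -/
theorem besselRiesz_local_dyadic (n : ℕ) (hn : 1 ≤ n) (α γ s : ℝ)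
    (hα0 : 0 < α) (hαn : α < n) (hγ : 0 < γ) (hs : 1 ≤ s) :
    ∃ C > (0 : ℝ), ∀ f : En n → ℝ, LocallyIntegrable f volume →
      ∀ x : En n, ∀ R : ℝ, 0 < R →
        (∫⁻ y in ball x R, ENNReal.ofReal (brKernel n α γ (x - y) * |f y|)) ≤
          ENNReal.ofReal C * maximalFn n f x *
            (∑' k : ℕ, ENNReal.ofReal
              (((2 : ℝ) ^ (-(k : ℤ) - 1) * R) ^ ((α - n) * s + n) /
                (1 + (2 : ℝ) ^ (-(k : ℤ) - 1) * R) ^ (γ * s))) ^ (1 / s) *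
            ENNReal.ofReal (R ^ ((n : ℝ) * (1 - 1 / s))) :=
  besselRiesz_local_dyadic_general n hn α γ s hαn hγ hs
end
end
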